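/- Suppose each state sequence τ_i fulfils exactly one criterion at each index (fixed per-state criteria). Then a flow diagram in which each τ_i's segmentation appears as an s–t path exists with λ interior nodes if and only if the string of per-index criteria of every τ_i, after collapsing consecutive equal characters, is a subsequence of some common supersequence of length λ realizable as a topological order of the diagram's interior nodes; in particular the minimum λ equals the shortest common supersequence length of the run-length-collapsed criterion strings. -/

import Mathlib

/-!
Every path of a flow diagram visits interior nodes in increasing order, so the labels of the
interior nodes, read in index order, form a common supersequence of all represented strings;
conversely a common supersequence `w` is realized by the diagram on `w.length` nodes in which
every forward pair is an edge. Segmentation is then harmless: collapsing the criterion string of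
any segmentation gives the same run-length collapse as the per-index criterion string, and the
collapse itself is a segmentation string (the coarsest one).
-/

structure FlowDiagram (C : Type*) where
  numInterior : ℕ
  label : Fin numInterior → C
  edge : Fin numInterior → Fin numInterior → Prop
  edge_lt : ∀ i j, edge i j → i < j
  src : Fin numInterior → Prop
  snk : Fin numInterior → Prop
  stEdge : Prop

/-- The string `r` appears as the label sequence of an `s`–`t` path of `F`. -/
def FlowDiagram.Represents {C : Type*} (F : FlowDiagram C) (r : List C) : Prop :=
  ∃ p : List (Fin F.numInterior),
    List.Chain' F.edge p ∧ p.map F.label = r ∧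
    (∀ x ∈ p.head?, F.src x) ∧ (∀ x ∈ p.getLast?, F.snk x) ∧
    (p = [] → F.stEdge)

/-- `IsSegString s c`: `s` is the criterion string of some segmentation of the per-index
criterion string `c`, i.e. `c` splits into nonempty constant blocks whose values, in
order, form `s`.  (Under fixed criteria a segment fulfils `C` iff all its states do.) -/
def IsSegString {α : Type*} (s c : List α) : Prop :=
  ∃ blocks : List (List α), blocks.flatten = c ∧
    (∀ b ∈ blocks, b ≠ [] ∧ ∃ a, ∀ x ∈ b, x = a) ∧
    s = blocks.filterMap List.head?

open List

section Destutter

variable {α : Type*} [DecidableEq α]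

theorem List.destutter'_ne_append_of_forall_eq {a : α} {b : List α} (l : List α)
    (hb : ∀ x ∈ b, x = a) : (b ++ l).destutter' (· ≠ ·) a = l.destutter' (· ≠ ·) a := by
  induction b with
  | nil => rfl
  | cons y b ih =>
    obtain rfl : y = a := hb y mem_cons_self
    rw [cons_append, destutter'_cons_neg (R := (· ≠ ·)) _ (not_not_intro rfl)]
    exact ih fun x hx => hb x (mem_cons_of_mem _ hx)

theorem List.destutter'_ne_cons_append_of_forall_eq {y : α} {b : List α} (l : List α)
    (hb : ∀ x ∈ b, x = y) (a : α) :
    (y :: (b ++ l)).destutter' (· ≠ ·) a = (y :: l).destutter' (· ≠ ·) a := by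
  simp only [destutter'_cons, destutter'_ne_append_of_forall_eq l hb]
  split_ifs with hay
  · rfl
  · obtain rfl : a = y := not_not.mp hay
    rw [destutter'_ne_append_of_forall_eq l hb]

theorem List.destutter_ne_cons (a : α) (l : List α) :
    (a :: l).destutter (· ≠ ·) = (a :: l).destutter' (· ≠ ·) a := by
  rw [destutter_cons', destutter'_cons_neg (R := (· ≠ ·)) _ (not_not_intro rfl)]

theorem List.destutter'_ne_flatten {blocks : List (List α)}
    (hconst : ∀ b ∈ blocks, b ≠ [] ∧ ∃ a, ∀ x ∈ b, x = a) (a : α) :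
    blocks.flatten.destutter' (· ≠ ·) a = (blocks.filterMap head?).destutter' (· ≠ ·) a := by
  induction blocks generalizing a with
  | nil => rfl
  | cons b rest ih =>
    obtain ⟨hne, x, hx⟩ := hconst b mem_cons_self
    obtain ⟨y, b, rfl⟩ := exists_cons_of_ne_nil hne
    have hb : ∀ z ∈ b, z = y := fun z hz =>
      (hx z (mem_cons_of_mem _ hz)).trans (hx y mem_cons_self).symm
    have ih := ih fun b' hb' => hconst b' (mem_cons_of_mem _ hb')
    rw [flatten_cons, cons_append, destutter'_ne_cons_append_of_forall_eq _ hb]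
    simp only [filterMap_cons, head?_cons, destutter'_cons, ih]

end Destutter

namespace IsSegString

variable {α : Type*}

theorem nil : IsSegString ([] : List α) [] := ⟨[], by simp⟩

theorem cons {s c : List α} (a : α) (h : IsSegString s c) : IsSegString (a :: s) (a :: c) := by
  obtain ⟨blocks, rfl, hconst, rfl⟩ := h
  refine ⟨[a] :: blocks, rfl, ?_, rfl⟩
  rintro b (_ | ⟨_, hb⟩)
  · exact ⟨cons_ne_nil _ _, a, by simp⟩
  · exact hconst b hb

theorem cons_self {s c : List α} {a : α} (h : IsSegString s (a :: c)) :
    IsSegString s (a :: a :: c) := by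
  obtain ⟨blocks, hflat, hconst, rfl⟩ := h
  obtain _ | ⟨b, rest⟩ := blocks
  · simp at hflat
  obtain ⟨hne, x, hx⟩ := hconst b mem_cons_self
  obtain ⟨y, b, rfl⟩ := exists_cons_of_ne_nil hne
  obtain ⟨rfl, hc⟩ : y = a ∧ b ++ rest.flatten = c := by simpa using hflat
  refine ⟨(y :: y :: b) :: rest, by simp [hc], ?_, rfl⟩
  rintro b' (_ | ⟨_, hb'⟩)
  · exact ⟨cons_ne_nil _ _, x, by simpa using hx⟩
  · exact hconst b' (mem_cons_of_mem _ hb')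

variable [DecidableEq α]

theorem destutter'_ne (l : List α) (a : α) :
    IsSegString (l.destutter' (· ≠ ·) a) (a :: l) := by
  induction l generalizing a with
  | nil => exact nil.cons a
  | cons b l ih =>
    by_cases hab : a = b
    · subst hab
      rw [destutter'_cons_neg (R := (· ≠ ·)) _ (not_not_intro rfl)]
      exact (ih a).cons_self
    · rw [destutter'_cons_pos _ hab]
      exact (ih b).cons a

theorem destutter_ne (c : List α) : IsSegString (c.destutter (· ≠ ·)) c := by
  cases c with
  | nil => exact nil
  | cons a l => exact destutter'_ne l a

theorem destutter_ne_eq {s c : List α} (h : IsSegString s c) :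
    c.destutter (· ≠ ·) = s.destutter (· ≠ ·) := by
  obtain ⟨blocks, rfl, hconst, rfl⟩ := h
  obtain _ | ⟨b, rest⟩ := blocks
  · rfl
  obtain ⟨hne, -⟩ := hconst b mem_cons_self
  obtain ⟨y, b, rfl⟩ := exists_cons_of_ne_nil hne
  simp only [flatten_cons, cons_append, filterMap_cons, head?_cons, destutter_ne_cons]
  rw [← cons_append, ← flatten_cons, destutter'_ne_flatten hconst]
  simp

end IsSegString

theorem List.sublist_finRange_of_pairwise_lt {n : ℕ} {p : List (Fin n)}
    (hp : p.Pairwise (· < ·)) : p <+ finRange n :=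
  sublist_of_subperm_of_pairwise (r := (· ≤ ·))
    (subperm_of_subset hp.nodup fun x _ => mem_finRange x)
    (hp.imp le_of_lt) ((pairwise_lt_finRange n).imp le_of_lt)

namespace FlowDiagram

variable {C : Type*}

def labels (F : FlowDiagram C) : List C := (finRange F.numInterior).map F.label

theorem Represents.sublist_labels {F : FlowDiagram C} {r : List C} (h : F.Represents r) :
    r <+ F.labels := by
  obtain ⟨p, hchain, rfl, -⟩ := h
  refine (sublist_finRange_of_pairwise_lt ?_).map F.label
  exact (hchain.imp F.edge_lt).pairwise

def ofList (w : List C) : FlowDiagram C where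
  numInterior := w.length
  label := w.get
  edge := (· < ·)
  edge_lt _ _ := id
  src _ := True
  snk _ := True
  stEdge := True

theorem ofList_represents {w r : List C} (h : r <+ w) : (ofList w).Represents r := by
  rw [← map_get_finRange w] at h
  obtain ⟨p, hp, rfl⟩ := sublist_map_iff.mp h
  exact ⟨p, ((pairwise_lt_finRange _).sublist hp).isChain, rfl, by simp [ofList]⟩

end FlowDiagram

theorem exists_flowDiagram_iff_exists_supersequence {ι α : Type*} [DecidableEq α]
    (cs : ι → List α) (lam : ℕ) :
    (∃ F : FlowDiagram α, F.numInterior = lam ∧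
      ∀ i, ∃ s, IsSegString s (cs i) ∧ F.Represents s) ↔
    ∃ w : List α, w.length = lam ∧ ∀ i, (cs i).destutter (· ≠ ·) <+ w := by
  constructor
  · rintro ⟨F, rfl, hF⟩
    refine ⟨F.labels, by simp [FlowDiagram.labels], fun i => ?_⟩
    obtain ⟨s, hseg, hrep⟩ := hF i
    rw [hseg.destutter_ne_eq]
    exact (destutter_sublist _ s).trans hrep.sublist_labels
  · rintro ⟨w, rfl, hw⟩
    exact ⟨.ofList w, rfl, fun i =>
      ⟨_, .destutter_ne (cs i), FlowDiagram.ofList_represents (hw i)⟩⟩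

/-- with fixed criteria (each state of `τ_i` fulfils exactly the criterion
`cs i` at its index), a flow diagram with `lam` interior nodes representing a
segmentation of every `τ_i` exists iff there is a common supersequence `w` of length
`lam` of the run-length-collapsed criterion strings (realized as the topological order
of the diagram's interior nodes); in particular the minimum `lam` equals the shortest
common supersequence length of the collapsed strings. -/
theorem stmt_13 (m k : ℕ) (cs : Fin m → List (Fin k)) :
    (∀ lam : ℕ,
      (∃ F : FlowDiagram (Fin k), F.numInterior = lam ∧
        ∀ i, ∃ s, IsSegString s (cs i) ∧ F.Represents s) ↔
      (∃ w : List (Fin k), w.length = lam ∧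
        ∀ i, ((cs i).destutter (· ≠ ·)).Sublist w)) ∧
    (∀ L : ℕ,
      IsLeast {lam : ℕ | ∃ F : FlowDiagram (Fin k), F.numInterior = lam ∧
        ∀ i, ∃ s, IsSegString s (cs i) ∧ F.Represents s} L ↔
      IsLeast {lam : ℕ | ∃ w : List (Fin k), w.length = lam ∧
        ∀ i, ((cs i).destutter (· ≠ ·)).Sublist w} L) := by
  have hlam := exists_flowDiagram_iff_exists_supersequence cs
  exact ⟨hlam, fun L => by rw [Set.ext hlam]⟩
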